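/- arXiv:0709.1733 — 5 statements merged into one kernel-verified Lean document; each statement's English description precedes it below -/
import Mathlib

section
/- Let A and B be self-adjoint n×n complex matrices with A ≥ 0 and Ker(A) ⊆ Ker(B). If λ₁ denotes the smallest positive eigenvalue of A, then -(‖B‖/λ₁)·A ≤ B ≤ (‖B‖/λ₁)·A in the Loewner order. -/
open Matrix
open scoped ComplexOrder

/-! Split a vector `x` along `ker A ⊕ (ker A)ᗮ`. Since `ker A ⊆ ker B` and both maps are
self-adjoint, the kernel component contributes to neither quadratic form, so both forms only
see the component `y ∈ (ker A)ᗮ`. That subspace is spanned by eigenvectors of `A` with eigenvalues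
`≥ λ₁`, whence `λ₁ ‖y‖² ≤ ⟪A y, y⟫`, while `|⟪B y, y⟫| ≤ ‖B‖ ‖y‖²`. -/

open Module End RCLike
open scoped InnerProductSpace

namespace LinearMap

variable {𝕜 E : Type*} [RCLike 𝕜] [NormedAddCommGroup E] [InnerProductSpace 𝕜 E]

theorem IsSymmetric.inner_map_add_of_mem_ker {S : E →ₗ[𝕜] E} (hS : S.IsSymmetric) (x : E)
    {w : E} (hw : w ∈ ker S) : ⟪S (x + w), x + w⟫_𝕜 = ⟪S x, x⟫_𝕜 := by
  rw [mem_ker] at hw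
  rw [map_add, hw, add_zero, inner_add_right, hS x w, hw, inner_zero_right, add_zero]

variable [FiniteDimensional 𝕜 E]

theorem IsSymmetric.re_inner_map_self_eq_sum {T : E →ₗ[𝕜] E} (hT : T.IsSymmetric) {n : ℕ}
    (hn : finrank 𝕜 E = n) (x : E) :
    re ⟪T x, x⟫_𝕜 = ∑ i, hT.eigenvalues hn i * ‖(hT.eigenvectorBasis hn).repr x i‖ ^ 2 := by
  rw [← (hT.eigenvectorBasis hn).repr.inner_map_map, PiLp.inner_apply, map_sum]
  refine Finset.sum_congr rfl fun i _ => ?_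
  rw [hT.eigenvectorBasis_apply_self_apply, inner_apply, map_mul (starRingEnd 𝕜), conj_ofReal,
    mul_left_comm, mul_conj, ← ofReal_pow, ← ofReal_mul, ofReal_re]

theorem IsPositive.mul_norm_sq_le_re_inner_of_mem_orthogonal_ker {T : E →ₗ[𝕜] E}
    (hT : T.IsPositive) {c : ℝ} (hc : ∀ μ : ℝ, 0 < μ → HasEigenvalue T μ → c ≤ μ) {y : E}
    (hy : y ∈ (ker T)ᗮ) : c * ‖y‖ ^ 2 ≤ re ⟪T y, y⟫_𝕜 := by
  set b := hT.isSymmetric.eigenvectorBasis rfl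
  rw [hT.isSymmetric.re_inner_map_self_eq_sum rfl, ← b.repr.norm_map, EuclideanSpace.norm_sq_eq,
    Finset.mul_sum]
  refine Finset.sum_le_sum fun i _ => ?_
  obtain hμ | hμ := (hT.nonneg_eigenvalues rfl i).eq_or_lt
  · have hb : b i ∈ ker T := by
      rw [mem_ker, hT.isSymmetric.apply_eigenvectorBasis, ← hμ, ofReal_zero, zero_smul]
    rw [b.repr_apply_apply, (Submodule.mem_orthogonal _ _).1 hy _ hb]
    simp
  · exact mul_le_mul_of_nonneg_right (hc _ hμ (hT.isSymmetric.hasEigenvalue_eigenvalues rfl i))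
      (sq_nonneg _)

end LinearMap

namespace ContinuousLinearMap

variable {𝕜 E : Type*} [RCLike 𝕜] [NormedAddCommGroup E] [InnerProductSpace 𝕜 E]
  [FiniteDimensional 𝕜 E]

theorem IsPositive.abs_re_inner_le {T S : E →L[𝕜] E} (hT : T.IsPositive)
    (hS : (S : E →ₗ[𝕜] E).IsSymmetric)
    (hker : LinearMap.ker (T : E →ₗ[𝕜] E) ≤ LinearMap.ker (S : E →ₗ[𝕜] E)) {c : ℝ} (hc : 0 < c)
    (heig : ∀ μ : ℝ, 0 < μ → HasEigenvalue (T : E →ₗ[𝕜] E) μ → c ≤ μ) (x : E) :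
    |re ⟪S x, x⟫_𝕜| ≤ ‖S‖ / c * re ⟪T x, x⟫_𝕜 := by
  set K := LinearMap.ker (T : E →ₗ[𝕜] E)
  set y := x - K.starProjection x
  have hx : x = y + K.starProjection x := (sub_add_cancel _ _).symm
  have hxK : K.starProjection x ∈ K := K.starProjection_apply_mem x
  have hTx : ⟪T x, x⟫_𝕜 = ⟪T y, y⟫_𝕜 := by
    rw [hx]; exact hT.toLinearMap.isSymmetric.inner_map_add_of_mem_ker y hxK
  have hSx : ⟪S x, x⟫_𝕜 = ⟪S y, y⟫_𝕜 := by
    rw [hx]; exact hS.inner_map_add_of_mem_ker y (hker hxK)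
  have hy : c * ‖y‖ ^ 2 ≤ re ⟪T y, y⟫_𝕜 :=
    hT.toLinearMap.mul_norm_sq_le_re_inner_of_mem_orthogonal_ker heig
      (K.sub_starProjection_mem_orthogonal x)
  calc |re ⟪S x, x⟫_𝕜| = |re ⟪S y, y⟫_𝕜| := by rw [hSx]
    _ ≤ ‖⟪S y, y⟫_𝕜‖ := abs_re_le_norm _
    _ ≤ ‖S y‖ * ‖y‖ := norm_inner_le_norm _ _
    _ ≤ ‖S‖ * ‖y‖ * ‖y‖ := by gcongr; exact S.le_opNorm y
    _ = ‖S‖ / c * (c * ‖y‖ ^ 2) := by field_simp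
    _ ≤ ‖S‖ / c * re ⟪T x, x⟫_𝕜 := by rw [hTx]; gcongr

theorem IsPositive.neg_smul_le_and_le_smul {T S : E →L[𝕜] E} (hT : T.IsPositive)
    (hS : (S : E →ₗ[𝕜] E).IsSymmetric)
    (hker : LinearMap.ker (T : E →ₗ[𝕜] E) ≤ LinearMap.ker (S : E →ₗ[𝕜] E)) {c : ℝ} (hc : 0 < c)
    (heig : ∀ μ : ℝ, 0 < μ → HasEigenvalue (T : E →ₗ[𝕜] E) μ → c ≤ μ) :
    -(((‖S‖ / c : ℝ) : 𝕜) • T) ≤ S ∧ S ≤ ((‖S‖ / c : ℝ) : 𝕜) • T := by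
  have hrT : ((((‖S‖ / c : ℝ) : 𝕜) • T : E →L[𝕜] E) : E →ₗ[𝕜] E).IsSymmetric :=
    hT.isSymmetric.smul (conj_ofReal _)
  have hbound := fun x => abs_le.1 (hT.abs_re_inner_le hS hker hc heig x)
  rw [le_def, le_def, sub_neg_eq_add]
  refine ⟨isPositive_def.2 ⟨hS.add hrT, fun x => ?_⟩,
    isPositive_def.2 ⟨hrT.sub hS, fun x => ?_⟩⟩ <;>
  simp only [reApplyInnerSelf_apply, _root_.add_apply, _root_.sub_apply, _root_.smul_apply,
    inner_add_left, inner_sub_left, inner_smul_left, conj_ofReal, map_add, map_sub,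
    re_ofReal_mul] <;>
  linarith [hbound x]

end ContinuousLinearMap

namespace Matrix

variable {𝕜 n : Type*} [RCLike 𝕜] [Fintype n] [DecidableEq n]

theorem posSemidef_iff_isPositive_toEuclideanCLM {A : Matrix n n 𝕜} :
    A.PosSemidef ↔ (toEuclideanCLM (𝕜 := 𝕜) A).IsPositive := by
  rw [← ContinuousLinearMap.isPositive_toLinearMap_iff, coe_toEuclideanCLM_eq_toEuclideanLin,
    isPositive_toEuclideanLin_iff]

theorem exists_mulVec_eq_smul_of_hasEigenvalue {A : Matrix n n 𝕜} {μ : 𝕜}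
    (h : HasEigenvalue (toEuclideanLin A) μ) : ∃ v : n → 𝕜, v ≠ 0 ∧ A *ᵥ v = μ • v := by
  obtain ⟨v, hv, hv0⟩ := h.exists_hasEigenvector
  exact ⟨WithLp.ofLp v, by simpa using hv0, congrArg WithLp.ofLp (mem_eigenspace_iff.1 hv)⟩

end Matrix

/-- Let `A` and `B` be self-adjoint `n × n` complex matrices with `A ≥ 0`
(positive semidefinite) and `Ker A ⊆ Ker B`.  If `λ₁` is the smallest positive eigenvalue
of `A`, then `-(‖B‖/λ₁) • A ≤ B ≤ (‖B‖/λ₁) • A` in the Loewner order. -/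
theorem stmt0 (n : ℕ) (A B : Matrix (Fin n) (Fin n) ℂ)
    (hA : A.PosSemidef) (hB : B.IsHermitian)
    (hker : ∀ v : Fin n → ℂ, A.mulVec v = 0 → B.mulVec v = 0)
    (lam1 : ℝ)
    (hlam : IsLeast {μ : ℝ | 0 < μ ∧ ∃ v : Fin n → ℂ, v ≠ 0 ∧ A.mulVec v = (μ : ℂ) • v} lam1) :
    (B + ((‖Matrix.toEuclideanCLM (𝕜 := ℂ) B‖ / lam1 : ℝ) : ℂ) • A).PosSemidef ∧
    (((‖Matrix.toEuclideanCLM (𝕜 := ℂ) B‖ / lam1 : ℝ) : ℂ) • A - B).PosSemidef := by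
  have hS : (toEuclideanCLM (𝕜 := ℂ) B).toLinearMap.IsSymmetric := by
    rw [coe_toEuclideanCLM_eq_toEuclideanLin, isSymmetric_toEuclideanLin_iff]
    exact hB
  have hker' : LinearMap.ker (toEuclideanCLM (𝕜 := ℂ) A).toLinearMap ≤
      LinearMap.ker (toEuclideanCLM (𝕜 := ℂ) B).toLinearMap := fun v hv =>
    congrArg (WithLp.toLp 2) (hker (WithLp.ofLp v) (congrArg WithLp.ofLp hv))
  have heig (μ : ℝ) (hμ : 0 < μ)
      (hμA : HasEigenvalue (toEuclideanCLM (𝕜 := ℂ) A).toLinearMap μ) : lam1 ≤ μ := by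
    rw [coe_toEuclideanCLM_eq_toEuclideanLin] at hμA
    exact hlam.2 ⟨hμ, exists_mulVec_eq_smul_of_hasEigenvalue hμA⟩
  obtain ⟨hlow, hup⟩ := (posSemidef_iff_isPositive_toEuclideanCLM.1 hA).neg_smul_le_and_le_smul
    hS hker' hlam.1.1 heig
  rw [posSemidef_iff_isPositive_toEuclideanCLM, posSemidef_iff_isPositive_toEuclideanCLM,
    map_add, map_sub, map_smul, ← sub_neg_eq_add]
  exact ⟨hlow, hup⟩
end

section
/- Let J be a positive half-integer and L ≥ 2. For a configuration m : {-L,…,L} → {-J,…,J}, define E(m) = Σ_{α=-L}^{L-1} (J+m_α)(J-m_{α+1}). Then E(m) = 0 if and only if there exists x ∈ {-L,…,L} such that m_α = -J for all α < x and m_α = J for all α > x. -/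
/-- `J` is a positive half-integer: `J ∈ (1/2)ℕ`, `J > 0`. -/
def IsHalfInt (J : ℝ) : Prop := ∃ k : ℕ, 0 < k ∧ J = k / 2

/-- `m` is an allowed spin value for spin `J`: `m ∈ {-J, -J+1, …, J}`. -/
def IsSpinVal (J m : ℝ) : Prop := |m| ≤ J ∧ ∃ k : ℤ, m = -J + k

/-!
Each bond term `(J + m α) (J - m (α + 1))` is nonnegative, so the energy vanishes iff every bond
is unfrustrated: `m α = -J` or `m (α + 1) = J`. A site with `m α ≠ -J` thus forces
`m (α + 1) = J`, which is again `≠ -J` because `J > 0`; so everything to the right of the first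
site not equal to `-J` equals `J`, and that site is the kink.
-/

open Finset

def IsKinkAt (P Q : ℤ → Prop) (a b x : ℤ) : Prop :=
  (∀ α ∈ Icc a b, α < x → P α) ∧ (∀ α ∈ Icc a b, x < α → Q α)

section Kink

variable {P Q : ℤ → Prop}

lemma forall_or_of_isKinkAt {a b x : ℤ} (hx : IsKinkAt P Q a b x) :
    ∀ α ∈ Icc a (b - 1), P α ∨ Q (α + 1) := by
  intro α hα
  rw [mem_Icc] at hα
  rcases lt_or_ge α x with hαx | hxα
  · exact .inl (hx.1 α (mem_Icc.2 ⟨hα.1, by omega⟩) hαx)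
  · exact .inr (hx.2 (α + 1) (mem_Icc.2 ⟨by omega, by omega⟩) (by omega))

lemma exists_isKinkAt_of_forall_or (hQP : ∀ α, Q α → ¬P α) {a b : ℤ} (hab : a ≤ b)
    (h : ∀ α ∈ Icc a (b - 1), P α ∨ Q (α + 1)) : ∃ x ∈ Icc a b, IsKinkAt P Q a b x := by
  induction b, hab using Int.leInduction with
  | base =>
    refine ⟨a, left_mem_Icc.2 le_rfl, fun α hα hαa => ?_, fun α hα hαa => ?_⟩ <;>
      simp only [Icc_self, mem_singleton] at hα <;> omega
  | succ b hab ih =>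
    obtain ⟨x, hx, hdown, hup⟩ :=
      ih fun α hα => h α (mem_Icc.2 ⟨(mem_Icc.1 hα).1, (mem_Icc.1 hα).2.trans (by omega)⟩)
    rw [mem_Icc] at hx
    rcases h b (mem_Icc.2 ⟨hab, by omega⟩) with hb | hb
    · -- `P b` rules out `Q b`, so the kink of `[a, b]` sits at `b` and moves to `b + 1`.
      have hxb : x = b := by
        by_contra hne
        exact hQP b (hup b (mem_Icc.2 ⟨hab, le_rfl⟩) (by omega)) hb
      refine ⟨b + 1, mem_Icc.2 ⟨by omega, le_rfl⟩, fun α hα hαb => ?_, fun α hα hbα => ?_⟩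
      · rcases eq_or_lt_of_le (Int.lt_add_one_iff.1 hαb) with rfl | hlt
        · exact hb
        · exact hdown α (mem_Icc.2 ⟨(mem_Icc.1 hα).1, hlt.le⟩) (hxb ▸ hlt)
      · exact absurd (mem_Icc.1 hα).2 (by omega)
    · refine ⟨x, mem_Icc.2 ⟨hx.1, by omega⟩, fun α hα hαx => ?_, fun α hα hxα => ?_⟩
      · exact hdown α (mem_Icc.2 ⟨(mem_Icc.1 hα).1, by omega⟩) hαx
      · rcases eq_or_lt_of_le (mem_Icc.1 hα).2 with rfl | hlt
        · exact hb
        · exact hup α (mem_Icc.2 ⟨(mem_Icc.1 hα).1, by omega⟩) hxα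

theorem forall_or_iff_exists_isKinkAt (hQP : ∀ α, Q α → ¬P α) {a b : ℤ} (hab : a ≤ b) :
    (∀ α ∈ Icc a (b - 1), P α ∨ Q (α + 1)) ↔ ∃ x ∈ Icc a b, IsKinkAt P Q a b x :=
  ⟨exists_isKinkAt_of_forall_or hQP hab, fun ⟨_, _, hx⟩ => forall_or_of_isKinkAt hx⟩

end Kink

section Energy

variable {J : ℝ} {m : ℤ → ℝ}

lemma bond_nonneg {s t : ℝ} (hs : |s| ≤ J) (ht : |t| ≤ J) : 0 ≤ (J + s) * (J - t) :=
  mul_nonneg (by linarith [neg_abs_le s]) (by linarith [le_abs_self t])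

lemma bond_eq_zero_iff {s t : ℝ} : (J + s) * (J - t) = 0 ↔ s = -J ∨ t = J := by
  rw [mul_eq_zero, add_eq_zero_iff_eq_neg', sub_eq_zero, eq_comm (a := J)]

theorem sum_bond_eq_zero_iff {a b : ℤ} (hm : ∀ α ∈ Icc a b, |m α| ≤ J) :
    ∑ α ∈ Icc a (b - 1), (J + m α) * (J - m (α + 1)) = 0 ↔
      ∀ α ∈ Icc a (b - 1), m α = -J ∨ m (α + 1) = J := by
  refine (sum_eq_zero_iff_of_nonneg fun α hα => ?_).trans
    (forall₂_congr fun _ _ => bond_eq_zero_iff)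
  rw [mem_Icc] at hα
  exact bond_nonneg (hm α (mem_Icc.2 ⟨hα.1, by omega⟩))
    (hm (α + 1) (mem_Icc.2 ⟨by omega, by omega⟩))

end Energy

/-- `E(m) = 0` iff `m` is a kink ground state configuration:
there is `x ∈ [-L,L]` with `m_α = -J` for `α < x` and `m_α = J` for `α > x`. -/
theorem stmt3 (J : ℝ) (hJ : IsHalfInt J) (L : ℤ) (hL : 2 ≤ L) (m : ℤ → ℝ)
    (hm : ∀ α ∈ Finset.Icc (-L) L, IsSpinVal J (m α)) :
    (∑ α ∈ Finset.Icc (-L) (L - 1), (J + m α) * (J - m (α + 1))) = 0 ↔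
      ∃ x ∈ Finset.Icc (-L) L,
        (∀ α ∈ Finset.Icc (-L) L, α < x → m α = -J) ∧
        (∀ α ∈ Finset.Icc (-L) L, x < α → m α = J) := by
  obtain ⟨k, hk, hJk⟩ := hJ
  have hJpos : 0 < J := hJk ▸ by positivity
  rw [sum_bond_eq_zero_iff fun α hα => (hm α hα).1]
  exact forall_or_iff_exists_isKinkAt (P := (m · = -J)) (Q := (m · = J))
    (fun α hup hdown => by linarith) (by omega)
end

section
/- Let J be a positive half-integer and L ≥ 2. For each integer-spaced value M with -J(2L+1) ≤ M ≤ J(2L+1) and M ≡ J(2L+1) mod 1 (i.e., M is an allowed total magnetization), there is exactly one ground state configuration m (i.e., with E(m)=0) satisfying Σ_α m_α = M. -/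
/-!
Each bond term `(J + m α) * (J - m (α + 1))` is nonnegative, so `E(m) = 0` says that on every bond
`m α = -J` or `m (α + 1) = J`: once a site is not at `-J`, every site to its right is at `J`, and a
ground state reads `-J, …, -J, x, J, …, J`. Two ground states ordered at one site are therefore
ordered at every site, so distinct ground states have distinct magnetizations. Conversely, a
configuration of magnetization `M` carries `K = M + (2L+1)J` integer quanta above the all-`-J`
state; packing them against the right end, at most `2J` per site, gives a ground state with the
same magnetization.
-/

open Finset

theorem Int.sum_Ico_sub {G : Type*} [AddCommGroup G] (f : ℤ → G) {a c : ℤ} (hac : a ≤ c) :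
    ∑ i ∈ Ico a c, (f (i + 1) - f i) = f c - f a := by
  induction c, hac using Int.leInduction with
  | base => simp
  | succ c hac ih =>
    rw [← insert_Ico_right_eq_Ico_add_one hac, sum_insert right_notMem_Ico, ih]
    abel

theorem IsSpinVal.exists_nat_eq_add {J m : ℝ} {n : ℕ} (hn : (n : ℝ) = 2 * J)
    (hm : IsSpinVal J m) : ∃ k : ℕ, k ≤ n ∧ m + J = k := by
  obtain ⟨hmJ, k, rfl⟩ := hm
  obtain ⟨hlo, hhi⟩ := abs_le.mp hmJ
  have hk0 : (0 : ℝ) ≤ k := by linarith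
  lift k to ℕ using (by exact_mod_cast hk0)
  push_cast at hhi ⊢
  exact ⟨k, by exact_mod_cast (show (k : ℝ) ≤ n by linarith), by ring⟩

theorem exists_nat_sum_add_eq {ι : Type*} {J : ℝ} {n : ℕ} (hn : (n : ℝ) = 2 * J)
    {s : Finset ι} {c : ι → ℝ} (hc : ∀ α ∈ s, IsSpinVal J (c α)) :
    ∃ K : ℕ, K ≤ n * #s ∧ ∑ α ∈ s, (c α + J) = K := by
  choose! k hkn hk using fun α hα => (hc α hα).exists_nat_eq_add hn
  refine ⟨∑ α ∈ s, k α, ?_, by push_cast; exact sum_congr rfl hk⟩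
  simpa [mul_comm] using sum_le_card_nsmul s k n hkn

section GroundStates

variable {J : ℝ} {a b : ℤ} {m m' : ℤ → ℝ}

theorem energy_eq_zero_iff (hm : ∀ α ∈ Icc a b, |m α| ≤ J) :
    ∑ α ∈ Icc a (b - 1), (J + m α) * (J - m (α + 1)) = 0 ↔
      ∀ α ∈ Icc a (b - 1), m α = -J ∨ m (α + 1) = J := by
  have hbounds : ∀ α ∈ Icc a (b - 1), -J ≤ m α ∧ m (α + 1) ≤ J := fun α hα => by
    rw [mem_Icc] at hα
    exact ⟨(abs_le.mp (hm α (mem_Icc.mpr ⟨hα.1, by omega⟩))).1,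
      (abs_le.mp (hm (α + 1) (mem_Icc.mpr ⟨by omega, by omega⟩))).2⟩
  rw [sum_eq_zero_iff_of_nonneg fun α hα => mul_nonneg (by linarith [hbounds α hα])
    (by linarith [hbounds α hα])]
  refine forall₂_congr fun α _ => ?_
  rw [mul_eq_zero, add_eq_zero_iff_eq_neg', sub_eq_zero, eq_comm (a := J)]

theorem eq_of_lt_of_ne_neg (hJ : J ≠ 0) (hb : ∀ α ∈ Icc a (b - 1), m α = -J ∨ m (α + 1) = J)
    {α : ℤ} (hα : a ≤ α) (hne : m α ≠ -J) {β : ℤ} (hαβ : α < β) (hβ : β ≤ b) : m β = J := by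
  induction β, (show α + 1 ≤ β by omega) using Int.leInduction with
  | base => exact (hb α (mem_Icc.mpr ⟨hα, by omega⟩)).resolve_left hne
  | succ β hαβ ih =>
    refine (hb β (mem_Icc.mpr ⟨by omega, by omega⟩)).resolve_left fun h => hJ ?_
    linarith [ih (by omega) (by omega)]

theorem le_of_lt_of_bonds (hJ : J ≠ 0) (hm : ∀ α ∈ Icc a b, |m α| ≤ J)
    (hm' : ∀ α ∈ Icc a b, |m' α| ≤ J) (hb : ∀ α ∈ Icc a (b - 1), m α = -J ∨ m (α + 1) = J)
    (hb' : ∀ α ∈ Icc a (b - 1), m' α = -J ∨ m' (α + 1) = J) {α₀ : ℤ} (hα₀ : α₀ ∈ Icc a b)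
    (hlt : m α₀ < m' α₀) : ∀ β ∈ Icc a b, m β ≤ m' β := by
  intro β hβ
  have hα₀' := mem_Icc.mp hα₀
  have hβ' := mem_Icc.mp hβ
  obtain ⟨hmlo, hmhi⟩ := abs_le.mp (hm β hβ)
  obtain ⟨hm'lo, hm'hi⟩ := abs_le.mp (hm' β hβ)
  rcases lt_trichotomy β α₀ with hβα₀ | rfl | hα₀β
  · suffices m β = -J by linarith
    by_contra hne
    have := eq_of_lt_of_ne_neg hJ hb hβ'.1 hne hβα₀ hα₀'.2
    linarith [(abs_le.mp (hm' α₀ hα₀)).2]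
  · exact hlt.le
  · have hne : m' α₀ ≠ -J := by linarith [(abs_le.mp (hm α₀ hα₀)).1]
    linarith [eq_of_lt_of_ne_neg hJ hb' hα₀'.1 hne hα₀β hβ'.2]

theorem eqOn_of_bonds_of_sum_eq (hJ : J ≠ 0) (hm : ∀ α ∈ Icc a b, |m α| ≤ J)
    (hm' : ∀ α ∈ Icc a b, |m' α| ≤ J) (hb : ∀ α ∈ Icc a (b - 1), m α = -J ∨ m (α + 1) = J)
    (hb' : ∀ α ∈ Icc a (b - 1), m' α = -J ∨ m' (α + 1) = J)
    (hsum : ∑ α ∈ Icc a b, m α = ∑ α ∈ Icc a b, m' α) : ∀ α ∈ Icc a b, m α = m' α := by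
  intro α hα
  by_contra hne
  rcases lt_or_gt_of_ne hne with hlt | hlt
  · exact (sum_lt_sum (le_of_lt_of_bonds hJ hm hm' hb hb' hα hlt) ⟨α, hα, hlt⟩).ne hsum
  · exact (sum_lt_sum (le_of_lt_of_bonds hJ hm' hm hb' hb hα hlt) ⟨α, hα, hlt⟩).ne' hsum

/-- The number of quanta on the sites `< α` when `K` quanta are packed against the right end `b`,
at most `n` per site. -/
def packedBelow (n : ℕ) (b K α : ℤ) : ℤ := max 0 (K - n * (b + 1 - α))

theorem packedBelow_add_one_sub_mem (n : ℕ) (b K α : ℤ) :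
    0 ≤ packedBelow n b K (α + 1) - packedBelow n b K α ∧
      packedBelow n b K (α + 1) - packedBelow n b K α ≤ n := by
  simp only [packedBelow, mul_sub, mul_add, mul_one]
  omega

theorem packedBelow_add_one_sub_eq_zero_or (n : ℕ) (b K α : ℤ) :
    packedBelow n b K (α + 1) - packedBelow n b K α = 0 ∨
      packedBelow n b K (α + 1 + 1) - packedBelow n b K (α + 1) = n := by
  simp only [packedBelow, mul_sub, mul_add, mul_one]
  omega

theorem exists_bonds_sum_add_eq {n : ℕ} (hn : (n : ℝ) = 2 * J) (hab : a ≤ b + 1) {K : ℤ}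
    (hK0 : 0 ≤ K) (hK : K ≤ n * (b + 1 - a)) :
    ∃ m : ℤ → ℝ, (∀ α, IsSpinVal J (m α)) ∧ ∑ α ∈ Icc a b, (m α + J) = K ∧
      ∀ α, m α = -J ∨ m (α + 1) = J := by
  set q : ℤ → ℤ := fun α => packedBelow n b K (α + 1) - packedBelow n b K α
  refine ⟨fun α => -J + q α, fun α => ⟨abs_le.mpr ?_, q α, rfl⟩, ?_, fun α => ?_⟩
  · obtain ⟨hq0, hqn⟩ := packedBelow_add_one_sub_mem n b K α
    have hq0' : (0 : ℝ) ≤ q α := by exact_mod_cast hq0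
    have hqn' : (q α : ℝ) ≤ n := by exact_mod_cast hqn
    constructor <;> linarith
  · have hq : ∑ α ∈ Icc a b, q α = K := by
      rw [← Ico_add_one_right_eq_Icc, Int.sum_Ico_sub _ hab, packedBelow, packedBelow]
      omega
    simp only [neg_add_cancel_comm]
    exact_mod_cast hq
  · rcases packedBelow_add_one_sub_eq_zero_or n b K α with h | h
    · left; simp [q, h]
    · right; simp only [q, h, Int.cast_natCast, hn]; ring

theorem exists_groundState_sum_eq {n : ℕ} (hn : (n : ℝ) = 2 * J) {c : ℤ → ℝ}
    (hc : ∀ α ∈ Icc a b, IsSpinVal J (c α)) :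
    ∃ m : ℤ → ℝ, (∀ α ∈ Icc a b, IsSpinVal J (m α)) ∧
      ∑ α ∈ Icc a b, m α = ∑ α ∈ Icc a b, c α ∧
      ∑ α ∈ Icc a (b - 1), (J + m α) * (J - m (α + 1)) = 0 := by
  rcases lt_or_ge (b + 1) a with hab | hab
  · exact ⟨c, hc, rfl, by rw [Icc_eq_empty (by omega), sum_empty]⟩
  obtain ⟨K, hKn, hcK⟩ := exists_nat_sum_add_eq hn hc
  have hcard : (#(Icc a b) : ℤ) = b + 1 - a := by
    rw [Int.card_Icc, Int.toNat_of_nonneg (by omega)]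
  obtain ⟨m, hm, hmK, hmb⟩ :=
    exists_bonds_sum_add_eq hn hab K.cast_nonneg (by rw [← hcard]; exact_mod_cast hKn)
  refine ⟨m, fun α _ => hm α, ?_, (energy_eq_zero_iff fun α _ => (hm α).1).2 fun α _ => hmb α⟩
  have hmc : ∑ α ∈ Icc a b, (m α + J) = ∑ α ∈ Icc a b, (c α + J) := by
    rw [hmK, hcK, Int.cast_natCast]
  simpa only [sum_add_distrib, add_left_inj] using hmc

end GroundStates

theorem stmt4_general (J : ℝ) (hJ : IsHalfInt J) (L : ℤ) (M : ℝ)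
    (hM : ∃ c : ℤ → ℝ, (∀ α ∈ Finset.Icc (-L) L, IsSpinVal J (c α)) ∧
      (∑ α ∈ Finset.Icc (-L) L, c α) = M) :
    (∃ m : ℤ → ℝ, (∀ α ∈ Finset.Icc (-L) L, IsSpinVal J (m α)) ∧
        (∑ α ∈ Finset.Icc (-L) L, m α) = M ∧
        (∑ α ∈ Finset.Icc (-L) (L - 1), (J + m α) * (J - m (α + 1))) = 0) ∧
    (∀ m m' : ℤ → ℝ,
      (∀ α ∈ Finset.Icc (-L) L, IsSpinVal J (m α)) →
      (∑ α ∈ Finset.Icc (-L) L, m α) = M →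
      (∑ α ∈ Finset.Icc (-L) (L - 1), (J + m α) * (J - m (α + 1))) = 0 →
      (∀ α ∈ Finset.Icc (-L) L, IsSpinVal J (m' α)) →
      (∑ α ∈ Finset.Icc (-L) L, m' α) = M →
      (∑ α ∈ Finset.Icc (-L) (L - 1), (J + m' α) * (J - m' (α + 1))) = 0 →
      ∀ α ∈ Finset.Icc (-L) L, m α = m' α) := by
  obtain ⟨k, hk, hJk⟩ := hJ
  have hk2J : (k : ℝ) = 2 * J := by rw [hJk]; ring
  have hJ0 : J ≠ 0 := by rw [hJk]; exact div_ne_zero (by exact_mod_cast hk.ne') two_ne_zero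
  obtain ⟨c, hc, rfl⟩ := hM
  refine ⟨exists_groundState_sum_eq hk2J hc, fun m m' hm hsum hE hm' hsum' hE' => ?_⟩
  have hmJ : ∀ α ∈ Icc (-L) L, |m α| ≤ J := fun α hα => (hm α hα).1
  have hm'J : ∀ α ∈ Icc (-L) L, |m' α| ≤ J := fun α hα => (hm' α hα).1
  exact eqOn_of_bonds_of_sum_eq hJ0 hmJ hm'J ((energy_eq_zero_iff hmJ).1 hE)
    ((energy_eq_zero_iff hm'J).1 hE') (hsum.trans hsum'.symm)

/-- In each allowed magnetization sector `M` there is exactly one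
ground state configuration (i.e. one with `E(m) = 0` and `Σ_α m_α = M`). -/
theorem stmt4 (J : ℝ) (hJ : IsHalfInt J) (L : ℤ) (hL : 2 ≤ L) (M : ℝ)
    (hM : ∃ c : ℤ → ℝ, (∀ α ∈ Finset.Icc (-L) L, IsSpinVal J (c α)) ∧
      (∑ α ∈ Finset.Icc (-L) L, c α) = M) :
    (∃ m : ℤ → ℝ, (∀ α ∈ Finset.Icc (-L) L, IsSpinVal J (m α)) ∧
        (∑ α ∈ Finset.Icc (-L) L, m α) = M ∧
        (∑ α ∈ Finset.Icc (-L) (L - 1), (J + m α) * (J - m (α + 1))) = 0) ∧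
    (∀ m m' : ℤ → ℝ,
      (∀ α ∈ Finset.Icc (-L) L, IsSpinVal J (m α)) →
      (∑ α ∈ Finset.Icc (-L) L, m α) = M →
      (∑ α ∈ Finset.Icc (-L) (L - 1), (J + m α) * (J - m (α + 1))) = 0 →
      (∀ α ∈ Finset.Icc (-L) L, IsSpinVal J (m' α)) →
      (∑ α ∈ Finset.Icc (-L) L, m' α) = M →
      (∑ α ∈ Finset.Icc (-L) (L - 1), (J + m' α) * (J - m' (α + 1))) = 0 →
      ∀ α ∈ Finset.Icc (-L) L, m α = m' α) :=
  stmt4_general J hJ L M hM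
end

section
/- For the type-(−) localized kink excitation Ψ⁻ₙ(x,m) (with m_α = -J for α ≤ x-2, m_{x-1} = -J+n, m_x = m-n, m_α = J for α ≥ x+1), the Ising kink energy is E₋(m,n) = n² + (J−m)n. -/
theorem sum_bond_energy_eq_of_kink {J : ℝ} {c : ℤ → ℝ} {a : ℤ} {s : Finset ℤ} (ha : a ∈ s)
    (hleft : ∀ α < a, c α = -J) (hright : ∀ β > a + 1, c β = J) :
    ∑ α ∈ s, (J + c α) * (J - c (α + 1)) = (J + c a) * (J - c (a + 1)) := by
  refine Finset.sum_eq_single_of_mem a ha fun α _ hα => ?_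
  rcases lt_or_gt_of_ne hα with hlt | hgt
  · rw [hleft α hlt, add_neg_cancel, zero_mul]
  · rw [hright (α + 1) (by omega), sub_self, mul_zero]

theorem stmt9_general (J : ℝ) (L x n : ℤ) (m : ℝ)
    (hx : x ∈ Finset.Icc (-L + 1) (L - 1))
    (c : ℤ → ℝ)
    (hc : ∀ α : ℤ, c α = if α ≤ x - 2 then -J
      else if α = x - 1 then -J + n else if α = x then m - n else J) :
    (∑ α ∈ Finset.Icc (-L) (L - 1), (J + c α) * (J - c (α + 1)))
      = (n : ℝ) ^ 2 + (J - m) * n := by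
  rw [Finset.mem_Icc] at hx
  have hleft : ∀ α < x - 1, c α = -J := fun α hα => by
    rw [hc, if_pos (by omega)]
  have hright : ∀ β > x - 1 + 1, c β = J := fun β hβ => by
    rw [hc, if_neg (by omega), if_neg (by omega), if_neg (by omega)]
  have hwall : c (x - 1) = -J + n := by rw [hc, if_neg (by omega), if_pos rfl]
  have hcore : c (x - 1 + 1) = m - n := by
    rw [hc, if_neg (by omega), if_neg (by omega), if_pos (by omega)]
  rw [sum_bond_energy_eq_of_kink (Finset.mem_Icc.mpr (by omega)) hleft hright, hwall, hcore]
  ring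

/-- The type-(−) localized kink excitation `Ψ⁻ₙ(x,m)` has Ising kink
energy `E₋(m,n) = n² + (J−m)n`. -/
theorem stmt9 (J : ℝ) (hJ : IsHalfInt J) (L x n : ℤ) (hL : 2 ≤ L) (m : ℝ)
    (hm : IsSpinVal J m) (hx : x ∈ Finset.Icc (-L + 1) (L - 1))
    (hn1 : 1 ≤ n) (hn2 : (n : ℝ) ≤ J + m)
    (c : ℤ → ℝ)
    (hc : ∀ α : ℤ, c α = if α ≤ x - 2 then -J
      else if α = x - 1 then -J + n else if α = x then m - n else J) :
    (∑ α ∈ Finset.Icc (-L) (L - 1), (J + c α) * (J - c (α + 1)))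
      = (n : ℝ) ^ 2 + (J - m) * n :=
  stmt9_general J L x n m hx c hc
end

section
/- Let J be a half-integer and m ∈ {0,…,J} with J - m ≥ 2. There exists an integer p ≥ 1 with E₋(m,p) = E₊(m,1) (i.e., p² + (J−m)p = J+m+1) if and only if 2J = ab for integers 2 ≤ a ≤ b with m = J - 2 + a - b; in that case p = a - 1 and the common energy is 2J - 1 + a - b. -/
/-- For `m ∈ {0,…,J}` with `J - m ≥ 2`: there is an integer
`p ≥ 1` with `E₋(m,p) = E₊(m,1)`, i.e. `p² + (J−m)p = J+m+1`, iff `2J = ab` for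
integers `2 ≤ a ≤ b` with `m = J - 2 + a - b`; in that case `p = a - 1` and the
common energy is `2J - 1 + a - b`. -/
theorem stmt13 (J m : ℝ) (hJ : IsHalfInt J) (hm : IsSpinVal J m) (hm0 : 0 ≤ m)
    (hgap : 2 ≤ J - m) :
    ((∃ p : ℤ, 1 ≤ p ∧ (p : ℝ) ^ 2 + (J - m) * p = J + m + 1) ↔
      (∃ a b : ℤ, 2 ≤ a ∧ a ≤ b ∧ 2 * J = (a : ℝ) * b ∧ m = J - 2 + a - b)) ∧
    (∀ a b p : ℤ, 2 ≤ a → a ≤ b → 2 * J = (a : ℝ) * b → m = J - 2 + (a : ℝ) - b →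
      1 ≤ p → (p : ℝ) ^ 2 + (J - m) * p = J + m + 1 →
      p = a - 1 ∧ J + m + 1 = 2 * J - 1 + a - b) := by
  obtain ⟨k, hk, hJk⟩ := hJ
  obtain ⟨habs, j, hmj⟩ := hm
  have hd : J - m = (k : ℝ) - j := by
    rw [hmj, hJk]; push_cast; ring
  constructor
  · constructor
    · rintro ⟨p, hp1, hpe⟩
      refine ⟨p + 1, p - 1 + ((k : ℤ) - j), by linarith, ?_, ?_, ?_⟩
      · have : (2 : ℝ) ≤ (k : ℝ) - j := by linarith [hd ▸ hgap]
        have : (2 : ℤ) ≤ (k : ℤ) - j := by exact_mod_cast this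
        linarith
      · push_cast
        linear_combination ((p : ℝ) + 1) * hd - hpe
      · push_cast
        linarith [hd]
    · rintro ⟨a, b, ha, hab, h2J, hm2⟩
      refine ⟨a - 1, by linarith, ?_⟩
      push_cast
      linear_combination (-(a : ℝ)) * hm2 - h2J
  · intro a b p ha hab h2J hm2 hp1 hpe
    have key : ((a : ℝ) - 1) ^ 2 + (J - m) * ((a : ℝ) - 1) = J + m + 1 := by
      linear_combination (-(a : ℝ)) * hm2 - h2J
    have h0 : ((p : ℝ) - ((a : ℝ) - 1)) * ((p : ℝ) + ((a : ℝ) - 1) + (J - m)) = 0 := by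
      linear_combination hpe - key
    have hpR : (1 : ℝ) ≤ (p : ℝ) := by exact_mod_cast hp1
    have haR : (2 : ℝ) ≤ (a : ℝ) := by exact_mod_cast ha
    rcases mul_eq_zero.mp h0 with h | h
    · constructor
      · have : (p : ℝ) = (a : ℝ) - 1 := by linarith
        exact_mod_cast this
      · linarith [hm2]
    · linarith
end
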